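/- arXiv:2106.13732 — 3 statements merged into one kernel-verified Lean document; each statement's English description precedes it below -/
import Mathlib

section
/- Fix r > 0 and a positive integer m. Define the random variable l = Σ_{n=1}^{m} z_n where z_1, ..., z_m are independent Bernoulli random variables with z_n ~ Bernoulli(r/(n−1+r)). Then P(l = j) = Γ(r)/Γ(m+r) · |s(m, j)| · r^j for j = 0, 1, ..., m, where |s(m, j)| are the unsigned Stirling numbers of the first kind. (This is the Chinese restaurant table distribution CRT(m, r).) -/
/-- Unsigned Stirling numbers of the first kind:
`|s(n+1,k)| = n·|s(n,k)| + |s(n,k-1)|`, `|s(0,0)| = 1`. -/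
def stir : ℕ → ℕ → ℕ
  | 0, 0 => 1
  | 0, _ + 1 => 0
  | n + 1, 0 => n * stir n 0
  | n + 1, j + 1 => n * stir n (j + 1) + stir n j

/-- pmf of `l = Σ_{n=1}^{m} z_n` with independent `z_n ~ Bernoulli(r/(n-1+r))`
(the Chinese restaurant table distribution `CRT(m, r)`), defined by convolution. -/
noncomputable def crtD (r : ℝ) : ℕ → ℕ → ℝ
  | 0, j => if j = 0 then 1 else 0
  | m + 1, 0 => (1 - r / ((m : ℝ) + r)) * crtD r m 0
  | m + 1, j + 1 => (1 - r / ((m : ℝ) + r)) * crtD r m (j + 1) + r / ((m : ℝ) + r) * crtD r m j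


open Polynomial

theorem Real.Gamma_add_nat_eq_ascPochhammer_mul {r : ℝ} {m : ℕ} (hr : ∀ n < m, r + n ≠ 0) :
    Real.Gamma (r + m) = (ascPochhammer ℝ m).eval r * Real.Gamma r := by
  induction m with
  | zero => simp
  | succ m ih =>
    rw [Nat.cast_succ, ← add_assoc, Real.Gamma_add_one (hr m m.lt_succ_self),
      ih fun n hn => hr n (hn.trans m.lt_succ_self), ascPochhammer_succ_eval]
    ring

/-- Multiplying by the rising factorial `r (r+1) ⋯ (r+m-1)` turns the convolution recursion of
`crtD` into that of `stir`, because `1 - r / (m + r) = m / (m + r)`. -/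
theorem crtD_eq_stir_mul_pow_div_ascPochhammer {r : ℝ} {m : ℕ} (hr : ∀ n < m, r + n ≠ 0)
    (j : ℕ) : crtD r m j = stir m j * r ^ j / (ascPochhammer ℝ m).eval r := by
  induction m generalizing j with
  | zero => cases j <;> simp [crtD, stir]
  | succ m ih =>
    have hmr : r + m ≠ 0 := hr m m.lt_succ_self
    have hP : (ascPochhammer ℝ m).eval r ≠ 0 := by
      rw [Ne, ascPochhammer_eval_eq_zero_iff]
      rintro ⟨n, hn, hnr⟩
      exact hr n (hn.trans m.lt_succ_self) (by rw [hnr]; ring)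
    have ih' := ih fun n hn => hr n (hn.trans m.lt_succ_self)
    rw [ascPochhammer_succ_eval]
    cases j <;> simp only [crtD, stir, ih', add_comm (m : ℝ) r] <;> push_cast <;> field_simp <;> ring

theorem crt_pmf_general (m : ℕ) (r : ℝ) (hr : 0 < r) (j : ℕ) :
    crtD r m j = Real.Gamma r / Real.Gamma (m + r) * (stir m j : ℝ) * r ^ j := by
  have hr' : ∀ n < m, r + n ≠ 0 := fun n _ => by positivity
  rw [add_comm (m : ℝ) r, Real.Gamma_add_nat_eq_ascPochhammer_mul hr',
    crtD_eq_stir_mul_pow_div_ascPochhammer hr']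
  have hG : Real.Gamma r ≠ 0 := (Real.Gamma_pos_of_pos hr).ne'
  field_simp

/-- For `r > 0` and a positive integer `m`, the sum `l` of independent
`Bernoulli(r/(n-1+r))`, `n = 1..m`, satisfies
`P(l = j) = Γ(r)/Γ(m+r) · |s(m,j)| · r^j` for `0 ≤ j ≤ m`. -/
theorem crt_pmf (m : ℕ) (hm : 0 < m) (r : ℝ) (hr : 0 < r) (j : ℕ) (hj : j ≤ m) :
    crtD r m j = Real.Gamma r / Real.Gamma (m + r) * (stir m j : ℝ) * r ^ j :=
  crt_pmf_general m r hr j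
end

section
/- Let r > 0, p ∈ (0,1). Suppose l ~ Poisson(−r·log(1−p)), and given l, m = Σ_{t=1}^{l} u_t where u_t are i.i.d. logarithmic Log(p) random variables. Then the conditional distribution of l given m = n is the Chinese restaurant table distribution CRT(n, r), i.e. P(l = j | m = n) = |s(n,j)| r^j / (r(r+1)···(r+n−1)) for 0 ≤ j ≤ n. -/
open Finset

/-- Poisson pmf with rate `lam`. -/
noncomputable def poissonD (lam : ℝ) (k : ℕ) : ℝ :=
  Real.exp (-lam) * lam ^ k / (Nat.factorial k)

/-- Negative binomial pmf `NB(r, p)`. -/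
noncomputable def nbD (r p : ℝ) (k : ℕ) : ℝ :=
  Real.Gamma (k + r) / ((Nat.factorial k : ℝ) * Real.Gamma r) * p ^ k * (1 - p) ^ r

/-- Logarithmic distribution pmf `Log(p)`. -/
noncomputable def logD (p : ℝ) : ℕ → ℝ
  | 0 => 0
  | j + 1 => -(p ^ (j + 1)) / ((j + 1 : ℝ) * Real.log (1 - p))

/-- pmf of the sum of `l` i.i.d. `Log(p)` random variables. -/
noncomputable def logConv (p : ℝ) : ℕ → ℕ → ℝ
  | 0, k => if k = 0 then 1 else 0
  | l + 1, k => ∑ j ∈ Finset.range (k + 1), logD p j * logConv p l (k - j)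

lemma stir_succ_zero (n : ℕ) : stir (n+1) 0 = n * stir n 0 := rfl
lemma stir_succ_succ (n j : ℕ) : stir (n+1) (j+1) = n * stir n (j+1) + stir n j := rfl

lemma stir_zero_pos (n : ℕ) (hn : n ≠ 0) : stir n 0 = 0 := by
  induction n with
  | zero => exact absurd rfl hn
  | succ m ih =>
    rw [stir_succ_zero]
    cases m with
    | zero => simp
    | succ k => rw [ih (by simp)]; simp

lemma stir_conv (n : ℕ) : ∀ l : ℕ,
    ∑ i ∈ Finset.range n, n.choose (i+1) * i.factorial * stir (n-1-i) l
      = (l+1) * stir n (l+1) := by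
  induction n with
  | zero => intro l; simp [stir]
  | succ n ih =>
    intro l
    have hsplit : ∑ i ∈ Finset.range (n+1),
        (n+1).choose (i+1) * i.factorial * stir (n+1-1-i) l
        = (∑ i ∈ Finset.range (n+1), n.choose i * i.factorial * stir (n-i) l)
          + (∑ i ∈ Finset.range (n+1), n.choose (i+1) * i.factorial * stir (n-i) l) := by
      rw [← Finset.sum_add_distrib]
      refine Finset.sum_congr rfl fun i hi => ?_
      have : n + 1 - 1 - i = n - i := by omega
      rw [this, Nat.choose_succ_succ]
      ring
    rw [hsplit]
    -- second sum: drop last term (choose = 0), then it's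
    -- ∑ i ∈ range n, n.choose (i+1) * i! * stir ((n-1-i)+1) l
    have hB : (∑ i ∈ Finset.range (n+1), n.choose (i+1) * i.factorial * stir (n-i) l)
        = ∑ i ∈ Finset.range n, n.choose (i+1) * i.factorial * stir ((n-1-i)+1) l := by
      rw [Finset.sum_range_succ, Nat.choose_succ_self]
      simp only [Nat.zero_mul, Nat.mul_zero, Nat.add_zero]
      refine Finset.sum_congr rfl fun i hi => ?_
      have : n - i = (n - 1 - i) + 1 := by
        have := Finset.mem_range.mp hi; omega
      rw [this]
    -- first sum: peel i = 0
    have hA : (∑ i ∈ Finset.range (n+1), n.choose i * i.factorial * stir (n-i) l)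
        = (∑ i ∈ Finset.range n, (i+1) * (n.choose (i+1) * i.factorial * stir (n-1-i) l))
          + stir n l := by
      rw [Finset.sum_range_succ']
      simp only [Nat.choose_zero_right, Nat.factorial_zero, Nat.one_mul, Nat.sub_zero]
      congr 1
      refine Finset.sum_congr rfl fun i hi => ?_
      have h1 : n - (i+1) = n - 1 - i := by omega
      rw [h1, Nat.factorial_succ]
      ring
    rw [hA, hB]
    cases l with
    | zero =>
      have hB' : (∑ i ∈ Finset.range n, n.choose (i+1) * i.factorial * stir ((n-1-i)+1) 0)
          = ∑ i ∈ Finset.range n, (n-1-i) * (n.choose (i+1) * i.factorial * stir (n-1-i) 0) := by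
        refine Finset.sum_congr rfl fun i hi => ?_
        rw [stir_succ_zero]; ring
      rw [hB']
      have hcomb : (∑ i ∈ Finset.range n, (i+1) * (n.choose (i+1) * i.factorial * stir (n-1-i) 0))
          + (∑ i ∈ Finset.range n, (n-1-i) * (n.choose (i+1) * i.factorial * stir (n-1-i) 0))
          = n * ∑ i ∈ Finset.range n, n.choose (i+1) * i.factorial * stir (n-1-i) 0 := by
        rw [← Finset.sum_add_distrib, Finset.mul_sum]
        refine Finset.sum_congr rfl fun i hi => ?_
        have hi' := Finset.mem_range.mp hi
        have : (i+1) + (n-1-i) = n := by omega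
        rw [← Nat.add_mul, this]
      calc (∑ i ∈ Finset.range n, (i+1) * (n.choose (i+1) * i.factorial * stir (n-1-i) 0))
            + stir n 0
            + (∑ i ∈ Finset.range n, (n-1-i) * (n.choose (i+1) * i.factorial * stir (n-1-i) 0))
          = (∑ i ∈ Finset.range n, (i+1) * (n.choose (i+1) * i.factorial * stir (n-1-i) 0))
            + (∑ i ∈ Finset.range n, (n-1-i) * (n.choose (i+1) * i.factorial * stir (n-1-i) 0))
            + stir n 0 := by ring
        _ = n * ∑ i ∈ Finset.range n, n.choose (i+1) * i.factorial * stir (n-1-i) 0 + stir n 0 := by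
            rw [hcomb]
        _ = n * ((0+1) * stir n 1) + stir n 0 := by rw [ih 0]
        _ = (0+1) * stir (n+1) 1 := by rw [stir_succ_succ]; ring
    | succ l' =>
      have hB' : (∑ i ∈ Finset.range n, n.choose (i+1) * i.factorial * stir ((n-1-i)+1) (l'+1))
          = (∑ i ∈ Finset.range n, (n-1-i) * (n.choose (i+1) * i.factorial * stir (n-1-i) (l'+1)))
            + ∑ i ∈ Finset.range n, n.choose (i+1) * i.factorial * stir (n-1-i) l' := by
        rw [← Finset.sum_add_distrib]
        refine Finset.sum_congr rfl fun i hi => ?_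
        rw [stir_succ_succ]; ring
      rw [hB']
      have hcomb : (∑ i ∈ Finset.range n, (i+1) * (n.choose (i+1) * i.factorial * stir (n-1-i) (l'+1)))
          + (∑ i ∈ Finset.range n, (n-1-i) * (n.choose (i+1) * i.factorial * stir (n-1-i) (l'+1)))
          = n * ∑ i ∈ Finset.range n, n.choose (i+1) * i.factorial * stir (n-1-i) (l'+1) := by
        rw [← Finset.sum_add_distrib, Finset.mul_sum]
        refine Finset.sum_congr rfl fun i hi => ?_
        have hi' := Finset.mem_range.mp hi
        have : (i+1) + (n-1-i) = n := by omega
        rw [← Nat.add_mul, this]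
      calc (∑ i ∈ Finset.range n, (i+1) * (n.choose (i+1) * i.factorial * stir (n-1-i) (l'+1)))
            + stir n (l'+1)
            + ((∑ i ∈ Finset.range n, (n-1-i) * (n.choose (i+1) * i.factorial * stir (n-1-i) (l'+1)))
              + ∑ i ∈ Finset.range n, n.choose (i+1) * i.factorial * stir (n-1-i) l')
          = ((∑ i ∈ Finset.range n, (i+1) * (n.choose (i+1) * i.factorial * stir (n-1-i) (l'+1)))
            + (∑ i ∈ Finset.range n, (n-1-i) * (n.choose (i+1) * i.factorial * stir (n-1-i) (l'+1))))
            + (∑ i ∈ Finset.range n, n.choose (i+1) * i.factorial * stir (n-1-i) l')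
            + stir n (l'+1) := by ring
        _ = n * ((l'+1+1) * stir n (l'+1+1)) + ((l'+1) * stir n (l'+1)) + stir n (l'+1) := by
            rw [hcomb, ih (l'+1), ih l']
        _ = (l'+1+1) * stir (n+1) (l'+1+1) := by rw [stir_succ_succ]; ring

lemma logConv_eq (p : ℝ) (hp : p ∈ Set.Ioo (0:ℝ) 1) (j : ℕ) : ∀ n : ℕ,
    logConv p j n = (j.factorial * stir n j : ℕ) * p ^ n
      / ((n.factorial : ℝ) * (-Real.log (1 - p)) ^ j) := by
  obtain ⟨hp0, hp1⟩ := hp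
  have h1p : (0:ℝ) < 1 - p := by linarith
  have hlog : Real.log (1 - p) < 0 := Real.log_neg h1p (by linarith)
  set L : ℝ := -Real.log (1 - p) with hL
  have hLpos : 0 < L := by simp [hL]; linarith
  clear_value L
  induction j with
  | zero =>
    intro n
    cases n with
    | zero => simp [logConv, stir]
    | succ m =>
      rw [stir_zero_pos (m+1) (by simp)]
      simp [logConv]
  | succ j ih =>
    intro n
    have hunf : logConv p (j+1) n = ∑ i ∈ Finset.range (n+1), logD p i * logConv p j (n - i) := rfl
    rw [hunf, Finset.sum_range_succ']
    have h0 : logD p 0 = 0 := rfl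
    rw [h0, zero_mul, add_zero]
    have hterm : ∀ i ∈ Finset.range n,
        logD p (i+1) * logConv p j (n - (i+1))
        = ((j.factorial : ℝ) * p ^ n / ((n.factorial : ℝ) * L ^ (j+1)))
            * ((n.choose (i+1) * i.factorial * stir (n-1-i) j : ℕ) : ℝ) := by
      intro i hi
      have hi' := Finset.mem_range.mp hi
      have hsub : n - (i+1) = n - 1 - i := by omega
      rw [hsub, ih (n-1-i)]
      have hlogD : logD p (i+1) = p ^ (i+1) / (((i:ℝ)+1) * L) := by
        show -(p ^ (i + 1)) / (((i:ℝ) + 1) * Real.log (1 - p)) = _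
        rw [hL, mul_neg, div_neg, ← neg_div]
      rw [hlogD]
      have hpp : p ^ n = p ^ (i+1) * p ^ (n-1-i) := by
        rw [← pow_add]; congr 1; omega
      have hfac : ((n.factorial : ℕ) : ℝ)
          = (n.choose (i+1) : ℝ) * (((i:ℕ):ℝ)+1) * (i.factorial : ℝ) * ((n-1-i).factorial : ℝ) := by
        have h := Nat.choose_mul_factorial_mul_factorial (show i+1 ≤ n by omega)
        have hs : n - (i+1) = n - 1 - i := by omega
        rw [hs, Nat.factorial_succ] at h
        push_cast [← h]
        ring
      have hL0 : L ≠ 0 := ne_of_gt hLpos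
      have hf1 : ((i.factorial : ℕ) : ℝ) ≠ 0 := by positivity
      have hf2 : (((n-1-i).factorial : ℕ) : ℝ) ≠ 0 := by positivity
      have hi1 : (((i:ℕ):ℝ)+1) ≠ 0 := by positivity
      have hch : ((n.choose (i+1) : ℕ) : ℝ) ≠ 0 := by
        have := Nat.choose_pos (show i+1 ≤ n by omega)
        positivity
      push_cast
      rw [hpp, hfac]
      field_simp
      ring
    rw [Finset.sum_congr rfl hterm, ← Finset.mul_sum, ← Nat.cast_sum, stir_conv n j]
    push_cast [Nat.factorial_succ]
    ring


lemma Gamma_prod (r : ℝ) (hr : 0 < r) (n : ℕ) :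
    Real.Gamma ((n:ℝ) + r) = (∏ i ∈ Finset.range n, (r + i)) * Real.Gamma r := by
  induction n with
  | zero => simp
  | succ n ih =>
    have h1 : ((n+1 : ℕ) : ℝ) + r = ((n:ℝ) + r) + 1 := by push_cast; ring
    have h2 : ((n:ℝ) + r) ≠ 0 := by positivity
    rw [h1, Real.Gamma_add_one h2, ih, Finset.prod_range_succ]
    ring

/-- If `l ~ Poisson(-r log(1-p))` and, given `l`, `m = Σ_{t=1}^l u_t` with `u_t` i.i.d.
`Log(p)`, then `l | m = n ~ CRT(n, r)`:
`P(l = j | m = n) = |s(n,j)| r^j / (r(r+1)⋯(r+n-1))` for `0 ≤ j ≤ n`.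
(The marginal of `m` is `NB(r, p)`.) -/
theorem crt_conditional (r p : ℝ) (hr : 0 < r) (hp : p ∈ Set.Ioo (0:ℝ) 1)
    (n j : ℕ) (hj : j ≤ n) :
    (poissonD (-(r * Real.log (1 - p))) j * logConv p j n) / nbD r p n =
      (stir n j : ℝ) * r ^ j / ∏ i ∈ Finset.range n, (r + i) := by
  obtain ⟨hp0, hp1⟩ := hp
  have h1p : (0:ℝ) < 1 - p := by linarith
  have hlog : Real.log (1 - p) < 0 := Real.log_neg h1p (by linarith)
  have hLpos : (0:ℝ) < -Real.log (1 - p) := by linarith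
  rw [poissonD, nbD, logConv_eq p ⟨hp0, hp1⟩ j n, Gamma_prod r hr n]
  rw [show ((1:ℝ) - p) ^ r = Real.exp (Real.log (1 - p) * r) from Real.rpow_def_of_pos h1p r]
  rw [show -(-(r * Real.log (1 - p))) = Real.log (1 - p) * r by ring]
  rw [show (-(r * Real.log (1 - p))) = r * (-Real.log (1 - p)) by ring, mul_pow]
  have hE : Real.exp (Real.log (1 - p) * r) ≠ 0 := Real.exp_ne_zero _
  have hG : Real.Gamma r ≠ 0 := ne_of_gt (Real.Gamma_pos_of_pos hr)
  have hP : (∏ i ∈ Finset.range n, (r + (i:ℝ))) ≠ 0 := by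
    refine ne_of_gt (Finset.prod_pos fun i _ => by positivity)
  have hnf : ((n.factorial : ℕ) : ℝ) ≠ 0 := by positivity
  have hjf : ((j.factorial : ℕ) : ℝ) ≠ 0 := by positivity
  have hpn : p ^ n ≠ 0 := by positivity
  have hL0 : -Real.log (1 - p) ≠ 0 := ne_of_gt hLpos
  have hLj : (-Real.log (1 - p)) ^ j ≠ 0 := pow_ne_zero _ hL0
  push_cast
  field_simp
end

section
/- Let (x_1, ..., x_V) follow a Dirichlet-multinomial distribution with parameter vector ψ ∈ ℝ^V_{>0} and total count n = Σ_w x_w. Introduce an auxiliary random variable ξ whose conditional distribution given the counts is Beta(n, ψ·) with ψ· = Σ_w ψ_w. Then the joint density of ((x_w)_w, ξ) is proportional (in (x_w)_w and ξ jointly, up to factors not depending on ψ) to Π_{w=1}^{V} NB(x_w | ψ_w, ξ), i.e. Π_w [Γ(x_w + ψ_w)/(x_w! Γ(ψ_w))] ξ^{x_w} (1−ξ)^{ψ_w}. -/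
open Finset

/-- Beta density with parameters `a`, `b`. -/
noncomputable def betaD (a b x : ℝ) : ℝ :=
  Real.Gamma (a + b) / (Real.Gamma a * Real.Gamma b) * x ^ (a - 1) * (1 - x) ^ (b - 1)

/-- Dirichlet-multinomial pmf with parameter `ψ` for counts `x`. -/
noncomputable def dirMultD {V : ℕ} (ψ : Fin V → ℝ) (x : Fin V → ℕ) : ℝ :=
  (Nat.factorial (∑ w, x w) : ℝ) / (∏ w, (Nat.factorial (x w) : ℝ)) *
    (Real.Gamma (∑ w, ψ w) / Real.Gamma ((∑ w, x w : ℕ) + ∑ w, ψ w)) *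
    ∏ w, Real.Gamma ((x w : ℝ) + ψ w) / Real.Gamma (ψ w)

set_option maxHeartbeats 1000000 in
/-- Negative-binomial augmentation of the Dirichlet-multinomial: with
`(x_w) ~ DirMult(ψ)`, `n = Σ x_w > 0`, and auxiliary `ξ | x ~ Beta(n, Σψ)`, the joint
density of `((x_w), ξ)` equals, up to a factor `C` not depending on `ψ`,
`Π_w NB(x_w | ψ_w, ξ)`. -/
theorem dirmult_beta_nb_augmentation (V : ℕ) :
    ∃ C : ℕ → ℝ → ℝ,
      ∀ (ψ : Fin V → ℝ), (∀ w, 0 < ψ w) →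
        ∀ (x : Fin V → ℕ), 0 < ∑ w, x w →
          ∀ ξ ∈ Set.Ioo (0:ℝ) 1,
            dirMultD ψ x * betaD (∑ w, x w) (∑ w, ψ w) ξ =
              C (∑ w, x w) ξ * ∏ w, nbD (ψ w) ξ (x w) := by
  refine ⟨fun n ξ => n * ξ⁻¹ * (1 - ξ)⁻¹, fun ψ hψ x hn ξ hξ => ?_⟩
  obtain ⟨hξ0, hξ1⟩ := hξ
  have h1ξ : (0:ℝ) < 1 - ξ := by linarith
  set n : ℕ := ∑ w, x w with hn'
  set s : ℝ := ∑ w, ψ w with hs'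
  have hne : (Finset.univ : Finset (Fin V)).Nonempty := by
    rcases (Finset.univ : Finset (Fin V)).eq_empty_or_nonempty with h | h
    · rw [hn', h] at hn; simp at hn
    · exact h
  have hs : 0 < s := Finset.sum_pos (fun w _ => hψ w) hne
  have hGs : Real.Gamma s ≠ 0 := (Real.Gamma_pos_of_pos hs).ne'
  have hGns : Real.Gamma ((n : ℝ) + s) ≠ 0 :=
    (Real.Gamma_pos_of_pos (by positivity)).ne'
  have hnR : (0:ℝ) < n := by exact_mod_cast hn
  have hGn : (n.factorial : ℝ) = n * Real.Gamma n := by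
    rw [← Real.Gamma_nat_eq_factorial, ← Real.Gamma_add_one hnR.ne']
  have hGnne : Real.Gamma (n : ℝ) ≠ 0 := (Real.Gamma_pos_of_pos hnR).ne'
  have hfac : (∏ w, (Nat.factorial (x w) : ℝ)) ≠ 0 :=
    Finset.prod_ne_zero_iff.mpr fun w _ => Nat.cast_ne_zero.mpr (Nat.factorial_ne_zero _)
  have hprod : ∏ w, nbD (ψ w) ξ (x w)
      = ((∏ w, Real.Gamma ((x w : ℝ) + ψ w) / Real.Gamma (ψ w)) /
          ∏ w, (Nat.factorial (x w) : ℝ)) * ξ ^ n * (1 - ξ) ^ s := by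
    simp only [nbD, Finset.prod_mul_distrib]
    rw [Finset.prod_pow_eq_pow_sum, ← Real.rpow_sum_of_pos h1ξ, ← hn', ← hs',
      ← Finset.prod_div_distrib]
    congr 1
    congr 1
    apply Finset.prod_congr rfl
    intro w _
    ring
  have hcast : (∑ w, ((x w : ℝ))) = (n : ℝ) := by rw [hn']; push_cast; rfl
  rw [hprod]
  simp only [dirMultD, betaD, ← hn', ← hs', hcast]
  rw [Real.rpow_sub hξ0, Real.rpow_one, Real.rpow_natCast, Real.rpow_sub h1ξ,
    Real.rpow_one, hGn]
  have hGP : (0:ℝ) < ∏ w, Real.Gamma (ψ w) :=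
    Finset.prod_pos fun w _ => Real.Gamma_pos_of_pos (hψ w)
  have hFpos : (0:ℝ) < ∏ w, (Nat.factorial (x w) : ℝ) :=
    Finset.prod_pos fun w _ => by positivity
  field_simp
end
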